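/- arXiv:2005.11270 — 3 statements merged into one kernel-verified Lean document; each statement's English description precedes it below -/
import Mathlib

section
/- If a matrix X ∈ ℝ^{M×N} satisfies the (r,δ')-RIP for some 1 < r ≤ s, where δ' = δ(r-1)/(s-1), then X satisfies the (s,δ)-RIP. Equivalently, B_s(X) ≤ ((s-1)/(r-1)) · B_r(X), where B_r(X) is the maximum over all subsets S of size r of the operator norm of P_S (XᵀX − I_N) P_S. -/
/-- `(s, δ)`-restricted isometry property (squared Euclidean norms). -/
def IsRIP {M N : ℕ} (A : Matrix (Fin M) (Fin N) ℝ) (s : ℕ) (δ : ℝ) : Prop :=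
  ∀ x : Fin N → ℝ, (Finset.univ.filter (fun i => x i ≠ 0)).card ≤ s →
    (1 - δ) * (∑ i, x i ^ 2) ≤ ∑ i, (A.mulVec x i) ^ 2 ∧
    (∑ i, (A.mulVec x i) ^ 2) ≤ (1 + δ) * (∑ i, x i ^ 2)

/-- Spectral (operator) norm of a square real matrix. -/
noncomputable def specNorm {N : ℕ} (B : Matrix (Fin N) (Fin N) ℝ) : ℝ :=
  ‖Matrix.toEuclideanCLM (𝕜 := ℝ) B‖

/-- The coordinate projection `P_S = ∑_{i ∈ S} e_i e_iᵀ`. -/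
def coordProj {N : ℕ} (S : Finset (Fin N)) : Matrix (Fin N) (Fin N) ℝ :=
  Matrix.diagonal (fun i => if i ∈ S then (1 : ℝ) else 0)

/-- `B_r(X)`: the maximum over all subsets `S ⊆ [N]` with `|S| = r` of the
spectral norm of `P_S (XᵀX − I) P_S`. -/
noncomputable def BVal {M N : ℕ} (r : ℕ) (X : Matrix (Fin M) (Fin N) ℝ) : ℝ :=
  sSup {a : ℝ | ∃ S : Finset (Fin N), S.card = r ∧
    a = specNorm (coordProj S * (X.transpose * X - 1) * coordProj S)}

/-! ### Auxiliary combinatorial lemmas -/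

lemma card_filter_subset_powersetCard {α : Type*} [DecidableEq α] (S U : Finset α)
    (hU : U ⊆ S) {k : ℕ} (hk : U.card ≤ k) :
    ((S.powersetCard k).filter (fun T => U ⊆ T)).card
      = (S.card - U.card).choose (k - U.card) := by
  rw [← Finset.card_sdiff_of_subset hU, ← Finset.card_powersetCard (k - U.card) (S \ U)]
  apply Finset.card_bij (fun T _ => T \ U)
  · intro T hT
    simp only [Finset.mem_filter, Finset.mem_powersetCard] at hT ⊢
    exact ⟨Finset.sdiff_subset_sdiff hT.1.1 le_rfl,
      by rw [Finset.card_sdiff_of_subset hT.2, hT.1.2]⟩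
  · intro T1 h1 T2 h2 h
    simp only [Finset.mem_filter, Finset.mem_powersetCard] at h1 h2
    have := congrArg (· ∪ U) h
    simpa [Finset.sdiff_union_of_subset h1.2, Finset.sdiff_union_of_subset h2.2] using this
  · intro T' hT'
    simp only [Finset.mem_powersetCard] at hT'
    have hdisj : Disjoint T' U := Finset.disjoint_of_subset_left hT'.1 (Finset.sdiff_disjoint)
    refine ⟨T' ∪ U, ?_, ?_⟩
    · simp only [Finset.mem_filter, Finset.mem_powersetCard]
      refine ⟨⟨Finset.union_subset (hT'.1.trans Finset.sdiff_subset) hU, ?_⟩,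
        Finset.subset_union_right⟩
      rw [Finset.card_union_of_disjoint hdisj, hT'.2, Nat.sub_add_cancel hk]
    · exact Finset.union_sdiff_cancel_right hdisj

/-- restriction of a vector to a coordinate subset -/
def pv {N : ℕ} (S : Finset (Fin N)) (x : Fin N → ℝ) : Fin N → ℝ :=
  fun i => if i ∈ S then x i else 0

/-- quadratic form -/
def qf {N : ℕ} (B : Matrix (Fin N) (Fin N) ℝ) (x : Fin N → ℝ) : ℝ :=
  ∑ i, ∑ j, x i * (B i j * x j)

lemma qf_eq_dot {N : ℕ} (B : Matrix (Fin N) (Fin N) ℝ) (x : Fin N → ℝ) :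
    qf B x = dotProduct x (B.mulVec x) := by
  unfold qf dotProduct Matrix.mulVec dotProduct
  refine Finset.sum_congr rfl fun i _ => ?_
  simp [Finset.mul_sum]

lemma pv_pv {N : ℕ} {S T : Finset (Fin N)} (h : T ⊆ S) (x : Fin N → ℝ) :
    pv T (pv S x) = pv T x := by
  funext i; unfold pv
  by_cases hi : i ∈ T
  · simp [hi, h hi]
  · simp [hi]

lemma qf_pv_expand {N : ℕ} (B : Matrix (Fin N) (Fin N) ℝ) (T : Finset (Fin N))
    (x : Fin N → ℝ) :
    qf B (pv T x) = ∑ i, ∑ j, (if i ∈ T ∧ j ∈ T then x i * (B i j * x j) else 0) := by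
  unfold qf pv
  refine Finset.sum_congr rfl fun i _ => Finset.sum_congr rfl fun j _ => ?_
  by_cases hi : i ∈ T <;> by_cases hj : j ∈ T <;> simp [hi, hj]

lemma sum_qf_powerset {N : ℕ} (B : Matrix (Fin N) (Fin N) ℝ)
    (hdiag : ∀ i, B i i = 0) (S : Finset (Fin N)) {s r : ℕ} (hS : S.card = s)
    (hr : 2 ≤ r) (x : Fin N → ℝ) (hx : ∀ i, i ∉ S → x i = 0) :
    ∑ T ∈ S.powersetCard r, qf B (pv T x)
      = ((s - 2).choose (r - 2) : ℝ) * qf B x := by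
  simp only [qf_pv_expand]
  rw [Finset.sum_comm]
  unfold qf
  rw [Finset.mul_sum]
  refine Finset.sum_congr rfl fun i _ => ?_
  rw [Finset.sum_comm, Finset.mul_sum]
  refine Finset.sum_congr rfl fun j _ => ?_
  rw [← Finset.sum_filter, Finset.sum_const, nsmul_eq_mul]
  by_cases hij : i = j
  · subst hij; simp [hdiag i]
  by_cases hiS : i ∈ S
  · by_cases hjS : j ∈ S
    · congr 1
      have hU : ({i, j} : Finset (Fin N)) ⊆ S := by
        intro a ha; simp only [Finset.mem_insert, Finset.mem_singleton] at ha
        rcases ha with rfl | rfl <;> assumption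
      have hcard : ({i, j} : Finset (Fin N)).card = 2 := by
        rw [Finset.card_insert_of_notMem (by simpa using hij), Finset.card_singleton]
      have := card_filter_subset_powersetCard S {i, j} hU (k := r)
        (by rw [hcard]; exact hr)
      rw [hcard, hS] at this
      rw [← this]
      have heq : (Finset.powersetCard r S).filter (fun T => i ∈ T ∧ j ∈ T)
          = (Finset.powersetCard r S).filter (fun T => ({i, j} : Finset (Fin N)) ⊆ T) := by
        apply Finset.filter_congr
        intro T _
        simp [Finset.insert_subset_iff, Finset.singleton_subset_iff]
      rw [heq]
    · simp [hx j hjS]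
  · simp [hx i hiS]

lemma sum_sq_powerset {N : ℕ} (S : Finset (Fin N)) {s r : ℕ} (hS : S.card = s)
    (hr : 1 ≤ r) (x : Fin N → ℝ) (hx : ∀ i, i ∉ S → x i = 0) :
    ∑ T ∈ S.powersetCard r, ∑ i, (pv T x i) ^ 2
      = ((s - 1).choose (r - 1) : ℝ) * ∑ i, x i ^ 2 := by
  have hexp : ∀ (T : Finset (Fin N)) (i : Fin N),
      (pv T x i) ^ 2 = if i ∈ T then x i ^ 2 else 0 := by
    intro T i; unfold pv; by_cases hi : i ∈ T <;> simp [hi]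
  simp only [hexp]
  rw [Finset.sum_comm]
  rw [Finset.mul_sum]
  refine Finset.sum_congr rfl fun i _ => ?_
  rw [← Finset.sum_filter, Finset.sum_const, nsmul_eq_mul]
  by_cases hiS : i ∈ S
  · congr 1
    have hU : ({i} : Finset (Fin N)) ⊆ S := Finset.singleton_subset_iff.2 hiS
    have := card_filter_subset_powersetCard S {i} hU (k := r)
      (by simpa using hr)
    rw [Finset.card_singleton, hS] at this
    rw [← this]
    have heq : (Finset.powersetCard r S).filter (fun T => i ∈ T)
        = (Finset.powersetCard r S).filter (fun T => ({i} : Finset (Fin N)) ⊆ T) := by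
      apply Finset.filter_congr; intro T _; simp
    rw [heq]
  · simp [hx i hiS]

/-! ### Spectral norm lemmas -/

section norms
variable {N : ℕ}

local notation "E" => EuclideanSpace ℝ (Fin N)

lemma inner_toCLM (B : Matrix (Fin N) (Fin N) ℝ) (y z : E) :
    (inner ℝ (Matrix.toEuclideanCLM (𝕜 := ℝ) B y) z : ℝ)
      = dotProduct (B.mulVec (WithLp.equiv 2 _ y)) (WithLp.equiv 2 _ z) := by
  rw [PiLp.inner_apply]
  have h := Matrix.ofLp_toEuclideanCLM (𝕜 := ℝ) B y
  unfold dotProduct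
  refine Finset.sum_congr rfl fun i _ => ?_
  have : (Matrix.toEuclideanCLM (𝕜 := ℝ) B y) i = B.mulVec (WithLp.equiv 2 _ y) i :=
    congrFun h i
  simp [this, mul_comm]

lemma norm_sq_eq (y : E) : ‖y‖ ^ 2 = ∑ i, (y i) ^ 2 := by
  rw [← real_inner_self_eq_norm_sq, PiLp.inner_apply]
  refine Finset.sum_congr rfl fun i _ => ?_
  simp [sq]

lemma inner_self_toCLM (B : Matrix (Fin N) (Fin N) ℝ) (y : E) :
    (inner ℝ (Matrix.toEuclideanCLM (𝕜 := ℝ) B y) y : ℝ) = qf B (WithLp.equiv 2 _ y) := by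
  rw [inner_toCLM, qf_eq_dot, dotProduct_comm]

/-- lower bound direction: quadratic form bounded by spectral norm -/
lemma abs_qf_le_specNorm (B : Matrix (Fin N) (Fin N) ℝ) (x : Fin N → ℝ) :
    |qf B x| ≤ specNorm B * ∑ i, x i ^ 2 := by
  set y : E := (WithLp.equiv 2 _).symm x with hy
  have hx : WithLp.equiv 2 ((i : Fin N) → ℝ) y = x := rfl
  have h1 : qf B x = (inner ℝ (Matrix.toEuclideanCLM (𝕜 := ℝ) B y) y : ℝ) := by
    rw [inner_self_toCLM, hx]
  have h2 : ∑ i, x i ^ 2 = ‖y‖ ^ 2 := by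
    rw [norm_sq_eq]; rfl
  rw [h1, h2]
  calc |(inner ℝ (Matrix.toEuclideanCLM (𝕜 := ℝ) B y) y : ℝ)|
      ≤ ‖Matrix.toEuclideanCLM (𝕜 := ℝ) B y‖ * ‖y‖ := abs_real_inner_le_norm _ _
    _ ≤ (specNorm B * ‖y‖) * ‖y‖ := by
        gcongr
        exact ContinuousLinearMap.le_opNorm _ _
    _ = specNorm B * ‖y‖ ^ 2 := by ring

/-- upper bound direction: for symmetric matrices -/
lemma specNorm_le_of_qf_le (B : Matrix (Fin N) (Fin N) ℝ) (hsym : B.transpose = B)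
    {c : ℝ} (hc : 0 ≤ c) (H : ∀ x : Fin N → ℝ, |qf B x| ≤ c * ∑ i, x i ^ 2) :
    specNorm B ≤ c := by
  set T := Matrix.toEuclideanCLM (𝕜 := ℝ) B with hT
  have Hy : ∀ y : E, |(inner ℝ (T y) y : ℝ)| ≤ c * ‖y‖ ^ 2 := by
    intro y
    rw [inner_self_toCLM]
    calc |qf B (WithLp.equiv 2 _ y)| ≤ c * ∑ i, (WithLp.equiv 2 _ y) i ^ 2 := H _
      _ = c * ‖y‖ ^ 2 := by rw [norm_sq_eq]; rfl
  have hsymT : ∀ y z : E, (inner ℝ (T y) z : ℝ) = inner ℝ (T z) y := by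
    intro y z
    rw [inner_toCLM, inner_toCLM]
    rw [dotProduct_comm (B.mulVec _), Matrix.dotProduct_mulVec]
    nth_rewrite 1 [← hsym]
    rw [Matrix.vecMul_transpose]
  have key : ∀ y z : E, 4 * (inner ℝ (T y) z : ℝ) ≤ 2 * c * (‖y‖ ^ 2 + ‖z‖ ^ 2) := by
    intro y z
    have e1 : (inner ℝ (T (y + z)) (y + z) : ℝ)
        = inner ℝ (T y) y + 2 * inner ℝ (T y) z + (inner ℝ (T z) z : ℝ) := by
      rw [map_add, inner_add_left, inner_add_right, inner_add_right, hsymT z y]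
      ring
    have e2 : (inner ℝ (T (y - z)) (y - z) : ℝ)
        = inner ℝ (T y) y - 2 * inner ℝ (T y) z + (inner ℝ (T z) z : ℝ) := by
      rw [map_sub, inner_sub_left, inner_sub_right, inner_sub_right, hsymT z y]
      ring
    have h1 := Hy (y + z)
    have h2 := Hy (y - z)
    have hpar : ‖y + z‖ ^ 2 + ‖y - z‖ ^ 2 = 2 * ‖y‖ ^ 2 + 2 * ‖z‖ ^ 2 := by
      rw [norm_add_sq_real, norm_sub_sq_real]; ring
    nlinarith [abs_le.1 h1, abs_le.1 h2]
  rw [specNorm, ← hT]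
  apply ContinuousLinearMap.opNorm_le_bound T hc
  intro y
  by_cases hy : y = 0
  · simp [hy]
  by_cases hTy : T y = 0
  · rw [hTy]
    simp only [norm_zero]
    positivity
  set z : E := (‖y‖ / ‖T y‖) • T y with hz
  have hTyn : (0:ℝ) < ‖T y‖ := norm_pos_iff.2 hTy
  have hyn : (0:ℝ) < ‖y‖ := norm_pos_iff.2 hy
  have hinner : (inner ℝ (T y) z : ℝ) = ‖y‖ * ‖T y‖ := by
    rw [hz, real_inner_smul_right, real_inner_self_eq_norm_sq]
    field_simp
  have hznorm : ‖z‖ = ‖y‖ := by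
    rw [hz, norm_smul]
    rw [Real.norm_eq_abs, abs_div, abs_of_nonneg (norm_nonneg y), abs_of_nonneg (norm_nonneg _)]
    field_simp
  have := key y z
  rw [hinner, hznorm] at this
  nlinarith

end norms

/-! ### coordProj and Gram matrix lemmas -/

lemma coordProj_mulVec {N : ℕ} (S : Finset (Fin N)) (x : Fin N → ℝ) :
    (coordProj S).mulVec x = pv S x := by
  funext i
  rw [coordProj, Matrix.mulVec_diagonal]
  unfold pv
  by_cases hi : i ∈ S <;> simp [hi]

lemma coordProj_transpose {N : ℕ} (S : Finset (Fin N)) :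
    (coordProj S).transpose = coordProj S := Matrix.diagonal_transpose _

lemma qf_proj {N : ℕ} (S : Finset (Fin N)) (B : Matrix (Fin N) (Fin N) ℝ)
    (x : Fin N → ℝ) :
    qf (coordProj S * B * coordProj S) x = qf B (pv S x) := by
  rw [qf_eq_dot, qf_eq_dot]
  rw [← Matrix.mulVec_mulVec, ← Matrix.mulVec_mulVec]
  rw [Matrix.dotProduct_mulVec x (coordProj S)]
  nth_rewrite 1 [← coordProj_transpose S]
  rw [Matrix.vecMul_transpose, coordProj_mulVec]

section gram
variable {M N : ℕ} (X : Matrix (Fin M) (Fin N) ℝ)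

lemma gram_symm : (X.transpose * X - 1).transpose = X.transpose * X - 1 := by
  rw [Matrix.transpose_sub, Matrix.transpose_mul, Matrix.transpose_transpose,
    Matrix.transpose_one]

lemma gram_diag (hcol : ∀ j, ∑ i, (X i j) ^ 2 = 1) (i : Fin N) :
    (X.transpose * X - 1 : Matrix (Fin N) (Fin N) ℝ) i i = 0 := by
  rw [Matrix.sub_apply, Matrix.mul_apply, Matrix.one_apply_eq]
  have : ∑ k, X.transpose i k * X k i = ∑ k, (X k i) ^ 2 :=
    Finset.sum_congr rfl fun k _ => by rw [Matrix.transpose_apply, sq]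
  rw [this, hcol i]
  ring

lemma qf_gram (x : Fin N → ℝ) :
    qf (X.transpose * X - 1) x = (∑ i, (X.mulVec x i) ^ 2) - ∑ i, x i ^ 2 := by
  rw [qf_eq_dot, Matrix.sub_mulVec, dotProduct_sub, Matrix.one_mulVec]
  congr 1
  · rw [← Matrix.mulVec_mulVec, Matrix.dotProduct_mulVec, Matrix.vecMul_transpose]
    unfold dotProduct
    exact Finset.sum_congr rfl fun i _ => (sq _).symm
  · unfold dotProduct
    exact Finset.sum_congr rfl fun i _ => (sq _).symm

end gram

lemma pv_support_card {N : ℕ} (T : Finset (Fin N)) (x : Fin N → ℝ) :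
    (Finset.univ.filter (fun i => pv T x i ≠ 0)).card ≤ T.card := by
  apply Finset.card_le_card
  intro i hi
  simp only [Finset.mem_filter, Finset.mem_univ, true_and] at hi
  by_contra h
  exact hi (by simp [pv, h])

lemma choose_identity {r s : ℕ} (hr : 2 ≤ r) (hrs : r ≤ s) :
    (r - 1) * (s - 1).choose (r - 1) = (s - 1) * (s - 2).choose (r - 2) := by
  obtain ⟨r', rfl⟩ : ∃ r', r = r' + 2 := ⟨r - 2, by omega⟩
  obtain ⟨s', rfl⟩ : ∃ s', s = s' + 2 := ⟨s - 2, by omega⟩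
  simp only [Nat.add_sub_cancel, show r' + 2 - 1 = r' + 1 by omega,
    show s' + 2 - 1 = s' + 1 by omega]
  simpa [Nat.succ_eq_add_one, Nat.mul_comm] using (Nat.add_one_mul_choose_eq s' r').symm

/-! ### BVal lemmas -/

lemma bddAbove_BSet {M N : ℕ} (r : ℕ) (X : Matrix (Fin M) (Fin N) ℝ) :
    BddAbove {a : ℝ | ∃ S : Finset (Fin N), S.card = r ∧
      a = specNorm (coordProj S * (X.transpose * X - 1) * coordProj S)} := by
  apply Set.Finite.bddAbove
  apply Set.Finite.subset (Set.finite_range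
    (fun S : Finset (Fin N) =>
      specNorm (coordProj S * (X.transpose * X - 1) * coordProj S)))
  rintro a ⟨S, -, rfl⟩
  exact ⟨S, rfl⟩

lemma le_BVal {M N : ℕ} {r : ℕ} (X : Matrix (Fin M) (Fin N) ℝ) {S : Finset (Fin N)}
    (hS : S.card = r) :
    specNorm (coordProj S * (X.transpose * X - 1) * coordProj S) ≤ BVal r X :=
  le_csSup (bddAbove_BSet r X) ⟨S, hS, rfl⟩

lemma BVal_nonneg {M N : ℕ} {r : ℕ} (hrN : r ≤ N) (X : Matrix (Fin M) (Fin N) ℝ) :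
    0 ≤ BVal r X := by
  obtain ⟨S, -, hS⟩ := Finset.exists_subset_card_eq
    (s := (Finset.univ : Finset (Fin N))) (n := r) (by simpa using hrN)
  exact le_trans (norm_nonneg _) (le_BVal X hS)

theorem stmt_3 {M N : ℕ} (X : Matrix (Fin M) (Fin N) ℝ) (r s : ℕ)
    (hcol : ∀ j, ∑ i, (X i j) ^ 2 = 1)
    (hr : 1 < r) (hrs : r ≤ s) (hsN : s ≤ N) (δ : ℝ) (hδ0 : 0 < δ) (hδ1 : δ < 1) :
    (IsRIP X r (δ * (r - 1) / (s - 1)) → IsRIP X s δ) ∧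
      BVal s X ≤ ((s - 1 : ℝ) / (r - 1)) * BVal r X := by
  have hr2 : 2 ≤ r := hr
  set G := X.transpose * X - 1 with hG
  have hdiag : ∀ i, G i i = 0 := gram_diag X hcol
  have hGsym : G.transpose = G := gram_symm X
  set C1 : ℕ := (s - 1).choose (r - 1) with hC1
  set C2 : ℕ := (s - 2).choose (r - 2) with hC2
  have hC2pos : 0 < C2 := Nat.choose_pos (by omega)
  have hid : ((r:ℝ) - 1) * (C1:ℝ) = ((s:ℝ) - 1) * (C2:ℝ) := by
    have h := choose_identity hr2 hrs
    have h1 : (((r - 1) * C1 : ℕ) : ℝ) = (((s - 1) * C2 : ℕ) : ℝ) := by exact_mod_cast h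
    push_cast [Nat.cast_sub (show 1 ≤ r by omega), Nat.cast_sub (show 1 ≤ s by omega)] at h1
    convert h1 using 2
  have hr1 : (0:ℝ) < (r:ℝ) - 1 := by
    have : (2:ℝ) ≤ (r:ℝ) := by exact_mod_cast hr2
    linarith
  have hs1 : (0:ℝ) < (s:ℝ) - 1 := by
    have : (r:ℝ) ≤ (s:ℝ) := by exact_mod_cast hrs
    linarith
  constructor
  · -- RIP transfer
    intro hRIP x hxcard
    obtain ⟨S, hsub, hScard⟩ := Finset.exists_superset_card_eq hxcard (by simpa using hsN)
    have hx : ∀ i, i ∉ S → x i = 0 := by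
      intro i hi
      by_contra h
      exact hi (hsub (Finset.mem_filter.2 ⟨Finset.mem_univ i, h⟩))
    have hsum := sum_qf_powerset G hdiag S hScard hr2 x hx
    have hsq := sum_sq_powerset S (s := s) (r := r) hScard (by omega) x hx
    set δ' := δ * ((r:ℝ) - 1) / ((s:ℝ) - 1) with hδ'
    have hTbound : ∀ T ∈ S.powersetCard r,
        |qf G (pv T x)| ≤ δ' * ∑ i, (pv T x i) ^ 2 := by
      intro T hT
      obtain ⟨hTS, hTcard⟩ := Finset.mem_powersetCard.1 hT
      have h := hRIP (pv T x) (le_trans (pv_support_card T x) (le_of_eq hTcard))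
      have hq := qf_gram X (pv T x)
      rw [← hG] at hq
      have hn : (0:ℝ) ≤ ∑ i, (pv T x i) ^ 2 := Finset.sum_nonneg fun i _ => sq_nonneg _
      rw [hq, abs_le]
      constructor <;> nlinarith [h.1, h.2]
    have habs : (C2:ℝ) * |qf G x| ≤ δ' * ((C1:ℝ) * ∑ i, x i ^ 2) := by
      calc (C2:ℝ) * |qf G x| = |∑ T ∈ S.powersetCard r, qf G (pv T x)| := by
            rw [hsum, abs_mul, Nat.abs_cast]
        _ ≤ ∑ T ∈ S.powersetCard r, |qf G (pv T x)| := Finset.abs_sum_le_sum_abs _ _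
        _ ≤ ∑ T ∈ S.powersetCard r, δ' * ∑ i, (pv T x i) ^ 2 := Finset.sum_le_sum hTbound
        _ = δ' * ((C1:ℝ) * ∑ i, x i ^ 2) := by rw [← Finset.mul_sum, hsq]
    have hδ'C1 : δ' * (C1:ℝ) = δ * (C2:ℝ) := by
      rw [hδ']
      field_simp
      linear_combination hid
    have hqf : |qf G x| ≤ δ * ∑ i, x i ^ 2 := by
      have heq : δ' * ((C1:ℝ) * ∑ i, x i ^ 2) = (C2:ℝ) * (δ * ∑ i, x i ^ 2) := by
        rw [← mul_assoc, hδ'C1]; ring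
      rw [heq] at habs
      exact le_of_mul_le_mul_left habs (by exact_mod_cast hC2pos)
    have hq := qf_gram X x
    rw [← hG] at hq
    have hn : (0:ℝ) ≤ ∑ i, x i ^ 2 := Finset.sum_nonneg fun i _ => sq_nonneg _
    have habs2 := abs_le.1 hqf
    constructor <;> nlinarith [habs2.1, habs2.2]
  · -- BVal inequality
    set K := ((s:ℝ) - 1) / ((r:ℝ) - 1) with hK
    have hBr0 : 0 ≤ BVal r X := BVal_nonneg (le_trans hrs hsN) X
    have hK0 : 0 ≤ K := div_nonneg (le_of_lt hs1) (le_of_lt hr1)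
    have hc0 : 0 ≤ K * BVal r X := mul_nonneg hK0 hBr0
    rw [BVal]
    apply Real.sSup_le _ hc0
    rintro a ⟨S, hScard, rfl⟩
    rw [← hG]
    apply specNorm_le_of_qf_le _ ?hsym hc0
    case hsym =>
      rw [Matrix.transpose_mul, Matrix.transpose_mul, coordProj_transpose, hGsym,
        Matrix.mul_assoc]
    intro x
    rw [qf_proj]
    set y := pv S x with hy
    have hys : ∀ i, i ∉ S → y i = 0 := by
      intro i hi; simp [hy, pv, hi]
    have hsum := sum_qf_powerset G hdiag S hScard hr2 y hys
    have hsq := sum_sq_powerset S (s := s) (r := r) hScard (by omega) y hys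
    have hTbound : ∀ T ∈ S.powersetCard r,
        |qf G (pv T y)| ≤ BVal r X * ∑ i, (pv T y i) ^ 2 := by
      intro T hT
      obtain ⟨hTS, hTcard⟩ := Finset.mem_powersetCard.1 hT
      have h1 : qf G (pv T y) = qf (coordProj T * G * coordProj T) (pv T y) := by
        rw [qf_proj, pv_pv (subset_refl T)]
      have hn : (0:ℝ) ≤ ∑ i, (pv T y i) ^ 2 := Finset.sum_nonneg fun i _ => sq_nonneg _
      calc |qf G (pv T y)| = |qf (coordProj T * G * coordProj T) (pv T y)| := by rw [h1]
        _ ≤ specNorm (coordProj T * G * coordProj T) * ∑ i, (pv T y i) ^ 2 :=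
            abs_qf_le_specNorm _ _
        _ ≤ BVal r X * ∑ i, (pv T y i) ^ 2 := by
            apply mul_le_mul_of_nonneg_right _ hn
            rw [hG]
            exact le_BVal X hTcard
    have habs : (C2:ℝ) * |qf G y| ≤ BVal r X * ((C1:ℝ) * ∑ i, y i ^ 2) := by
      calc (C2:ℝ) * |qf G y| = |∑ T ∈ S.powersetCard r, qf G (pv T y)| := by
            rw [hsum, abs_mul, Nat.abs_cast]
        _ ≤ ∑ T ∈ S.powersetCard r, |qf G (pv T y)| := Finset.abs_sum_le_sum_abs _ _
        _ ≤ ∑ T ∈ S.powersetCard r, BVal r X * ∑ i, (pv T y i) ^ 2 :=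
            Finset.sum_le_sum hTbound
        _ = BVal r X * ((C1:ℝ) * ∑ i, y i ^ 2) := by rw [← Finset.mul_sum, hsq]
    have hyx : ∑ i, y i ^ 2 ≤ ∑ i, x i ^ 2 := by
      apply Finset.sum_le_sum
      intro i _
      rw [hy]
      unfold pv
      by_cases hi : i ∈ S
      · simp [hi]
      · simp only [hi, if_false]
        simp
        positivity
    have hC1K : (C1:ℝ) = K * (C2:ℝ) := by
      rw [hK]
      field_simp
      linear_combination hid
    have h2 : (C2:ℝ) * |qf G y| ≤ (C2:ℝ) * (K * BVal r X * ∑ i, x i ^ 2) := by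
      have e1 : BVal r X * ((C1:ℝ) * ∑ i, y i ^ 2)
          = (C2:ℝ) * (K * BVal r X * ∑ i, y i ^ 2) := by
        rw [hC1K]; ring
      rw [e1] at habs
      refine le_trans habs ?_
      refine mul_le_mul_of_nonneg_left ?_ (by positivity)
      exact mul_le_mul_of_nonneg_left hyx hc0
    exact le_of_mul_le_mul_left h2 (by exact_mod_cast hC2pos)
end

section
/- Let A ∈ ℝ^{M×N} have rows u_iᵀ drawn i.i.d. from N(0, I − (1−ε)xxᵀ) for a fixed vector x with 1−ε ≤ ‖x‖² ≤ 1+ε, where ε = (1−δ)/(2(1+δ)) and δ ∈ (0,1). Then ‖(1/√M)Ax‖² is distributed as (1/M)(‖x‖² − (1−ε)‖x‖⁴)·χ²_M, and consequently Pr[‖(1/√M)Ax‖² ≥ (1−δ)‖x‖²] ≤ exp(−δ²M/12). -/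
open MeasureTheory ProbabilityTheory

/-- The chi-squared distribution with `M` degrees of freedom: the law of the sum of
squares of `M` i.i.d. standard Gaussians. -/
noncomputable def chiSqMeasure (M : ℕ) : Measure ℝ :=
  Measure.map (fun g : Fin M → ℝ => ∑ i, (g i) ^ 2)
    (Measure.pi fun _ : Fin M => gaussianReal 0 1)

open scoped ENNReal NNReal

section Auxiliary
open Real Set


lemma aux_log_bound {δ : ℝ} (h0 : 0 < δ) (h1 : δ ≤ 1) :
    Real.log (1 + δ) ≤ δ - δ ^ 2 / 6 := by
  have hδ : (0:ℝ) < 1 + δ := by linarith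
  have hr : (0:ℝ) ≤ 1 + δ/2 - δ^2/12 := by nlinarith
  have hsq : Real.sqrt (1 + δ) ≤ 1 + δ/2 - δ^2/12 := by
    rw [show (1 + δ/2 - δ^2/12) = Real.sqrt ((1 + δ/2 - δ^2/12)^2) from (Real.sqrt_sq hr).symm]
    apply Real.sqrt_le_sqrt
    nlinarith
  have hlog : Real.log (Real.sqrt (1 + δ)) ≤ Real.sqrt (1 + δ) - 1 :=
    Real.log_le_sub_one_of_pos (Real.sqrt_pos.mpr hδ)
  have h2 : Real.log (1 + δ) = 2 * Real.log (Real.sqrt (1 + δ)) := by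
    rw [Real.log_sqrt hδ.le]; ring
  rw [h2]; nlinarith

lemma map_eval_pi {M : ℕ} (μ : Measure ℝ) [IsProbabilityMeasure μ] (i : Fin M) :
    Measure.map (fun g : Fin M → ℝ => g i) (Measure.pi fun _ => μ) = μ := by
  ext s hs
  rw [Measure.map_apply (measurable_pi_apply i) hs,
    show (fun g : Fin M → ℝ => g i) ⁻¹' s = Function.eval i ⁻¹' s from rfl,
    ← Set.univ_pi_update_univ, Measure.pi_pi]
  rw [Finset.prod_eq_single i (fun j _ hj => by
      rw [Function.update_of_ne hj]; exact measure_univ)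
    (fun h => absurd (Finset.mem_univ i) h)]
  rw [Function.update_self]

lemma iIndepFun_eval {M : ℕ} (μ : Measure ℝ) [IsProbabilityMeasure μ] :
    iIndepFun (fun i (g : Fin M → ℝ) => g i)
      (Measure.pi fun _ => μ) := by
  rw [iIndepFun_iff_measure_inter_preimage_eq_mul]
  intro S sets H
  classical
  have h1 : (⋂ i ∈ S, (fun g : Fin M → ℝ => g i) ⁻¹' sets i)
      = Set.pi Set.univ (fun i => if i ∈ S then sets i else Set.univ) := by
    ext g
    simp only [Set.mem_iInter, Set.mem_preimage, Set.mem_pi, Set.mem_univ, true_implies]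
    constructor
    · intro h i; split_ifs with hi
      · exact h i hi
      · trivial
    · intro h i hi; have := h i; rwa [if_pos hi] at this
  rw [h1, Measure.pi_pi]
  calc (∏ i : Fin M, μ (if i ∈ S then sets i else Set.univ))
      = ∏ i ∈ S, μ (if i ∈ S then sets i else Set.univ) :=
        (Finset.prod_subset (Finset.subset_univ S) (fun i _ hi => by
          rw [if_neg hi]; exact measure_univ)).symm
    _ = ∏ i ∈ S, Measure.pi (fun _ : Fin M => μ) ((fun g : Fin M → ℝ => g i) ⁻¹' sets i) := by
        refine Finset.prod_congr rfl fun i hi => ?_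
        rw [if_pos hi, ← Measure.map_apply (measurable_pi_apply i) (H i hi), map_eval_pi]

lemma pi_map_aux {M : ℕ} {f : ℝ → ℝ} (hf : Measurable f) (μ : Measure ℝ)
    [IsProbabilityMeasure μ] :
    Measure.pi (fun _ : Fin M => μ.map f) =
      Measure.map (fun g : Fin M → ℝ => fun i => f (g i)) (Measure.pi fun _ => μ) := by
  haveI : IsProbabilityMeasure (μ.map f) := Measure.isProbabilityMeasure_map hf.aemeasurable
  refine Measure.pi_eq fun s hs => ?_
  have hmeas : Measurable (fun g : Fin M → ℝ => fun i => f (g i)) :=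
    measurable_pi_lambda _ fun i => hf.comp (measurable_pi_apply i)
  rw [Measure.map_apply hmeas (MeasurableSet.univ_pi hs)]
  have hpre : (fun g : Fin M → ℝ => fun i => f (g i)) ⁻¹' (Set.pi Set.univ s)
      = Set.pi Set.univ (fun i => f ⁻¹' s i) := by
    ext g; simp [Set.mem_pi]
  rw [hpre, Measure.pi_pi]
  exact Finset.prod_congr rfl fun i _ => (Measure.map_apply hf (hs i)).symm


lemma aux_pdf_mul {t : ℝ} (x : ℝ) :
    Real.exp (t * x ^ 2) * gaussianPDFReal 0 1 x
      = (Real.sqrt (2 * π))⁻¹ * Real.exp (-(1/2 - t) * x ^ 2) := by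
  rw [gaussianPDFReal]
  push_cast
  rw [mul_one, mul_comm (Real.exp _), mul_assoc, ← Real.exp_add]
  norm_num
  ring_nf
  exact Or.inl trivial

lemma integrable_exp_sq_gaussian {t : ℝ} (ht : t < 1/2) :
    Integrable (fun x => Real.exp (t * x ^ 2)) (gaussianReal 0 1) := by
  have hb : (0:ℝ) < 1/2 - t := by linarith
  rw [gaussianReal_of_var_ne_zero 0 one_ne_zero]
  rw [integrable_withDensity_iff (measurable_gaussianPDF 0 1)
    (ae_of_all _ fun x => ENNReal.ofReal_lt_top)]
  have : (fun x => Real.exp (t * x ^ 2) * (gaussianPDF 0 1 x).toReal)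
      = fun x => (Real.sqrt (2 * π))⁻¹ * Real.exp (-(1/2 - t) * x ^ 2) := by
    funext x
    rw [gaussianPDF, ENNReal.toReal_ofReal (gaussianPDFReal_nonneg _ _ _), aux_pdf_mul]
  rw [this]
  exact (integrable_exp_neg_mul_sq hb).const_mul _

lemma integral_exp_sq_gaussian {t : ℝ} (ht : t < 1/2) :
    ∫ x, Real.exp (t * x ^ 2) ∂(gaussianReal 0 1) = (Real.sqrt (1 - 2*t))⁻¹ := by
  have hb : (0:ℝ) < 1/2 - t := by linarith
  rw [gaussianReal_of_var_ne_zero 0 one_ne_zero]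
  have hd : (volume.withDensity (gaussianPDF 0 1))
      = volume.withDensity (fun x => ((gaussianPDFReal 0 1 x).toNNReal : ℝ≥0∞)) := rfl
  rw [hd, integral_withDensity_eq_integral_smul
    ((measurable_gaussianPDFReal 0 1).real_toNNReal) _]
  have : (fun x => (gaussianPDFReal 0 1 x).toNNReal • Real.exp (t * x ^ 2))
      = fun x => (Real.sqrt (2 * π))⁻¹ * Real.exp (-(1/2 - t) * x ^ 2) := by
    funext x
    rw [NNReal.smul_def, Real.coe_toNNReal _ (gaussianPDFReal_nonneg _ _ _), smul_eq_mul,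
      mul_comm, aux_pdf_mul]
  rw [this, integral_const_mul, integral_gaussian]
  rw [show π / (1/2 - t) = (1 - 2*t)⁻¹ * (2 * π) by field_simp]
  rw [Real.sqrt_mul (inv_nonneg.mpr (by linarith : (0:ℝ) ≤ 1 - 2*t)) (2*π), Real.sqrt_inv]
  have h2π : Real.sqrt (2 * π) ≠ 0 := by positivity
  field_simp


lemma mgf_coord_sq {M : ℕ} (i : Fin M) {t : ℝ} (ht : t < 1/2) :
    mgf (fun g : Fin M → ℝ => g i ^ 2) (Measure.pi fun _ => gaussianReal 0 1) t
      = (Real.sqrt (1 - 2*t))⁻¹ := by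
  have h1 : ∫ g : Fin M → ℝ, Real.exp (t * (g i)^2) ∂(Measure.pi fun _ => gaussianReal 0 1)
      = ∫ y, Real.exp (t * y^2) ∂(gaussianReal 0 1) := by
    conv_rhs => rw [← map_eval_pi (gaussianReal 0 1) i]
    exact (integral_map (f := fun y => Real.exp (t * y^2)) (φ := fun g : Fin M → ℝ => g i)
      (measurable_pi_apply i).aemeasurable
      ((Real.measurable_exp.comp ((measurable_id.pow_const 2).const_mul t)).aestronglyMeasurable)).symm
  rw [mgf]
  exact h1.trans (integral_exp_sq_gaussian ht)

lemma integrable_coord_sq {M : ℕ} (i : Fin M) {t : ℝ} (ht : t < 1/2) :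
    Integrable (fun g : Fin M → ℝ => Real.exp (t * (g i)^2))
      (Measure.pi fun _ => gaussianReal 0 1) := by
  have h := integrable_exp_sq_gaussian ht
  rw [← map_eval_pi (gaussianReal 0 1) i] at h
  exact (integrable_map_measure
    ((Real.measurable_exp.comp ((measurable_id.pow_const 2).const_mul t)).aestronglyMeasurable)
    (measurable_pi_apply i).aemeasurable).mp h

lemma chiSq_tail (M : ℕ) {δ : ℝ} (hδ0 : 0 < δ) (hδ1 : δ < 1) :
    chiSqMeasure M (Set.Ici ((1+δ) * M)) ≤ ENNReal.ofReal (Real.exp (-(δ^2 * M)/12)) := by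
  have h1δ : (0:ℝ) < 1 + δ := by linarith
  set t : ℝ := δ / (2*(1+δ)) with hts
  have ht0 : 0 ≤ t := by positivity
  have ht2 : t < 1/2 := by rw [hts, div_lt_iff₀ (by linarith)]; linarith
  have h2t : 1 - 2*t = (1+δ)⁻¹ := by rw [hts]; field_simp; ring
  set π₁ := (Measure.pi fun _ : Fin M => gaussianReal 0 1) with hπ
  set X : Fin M → (Fin M → ℝ) → ℝ := fun i g => g i ^ 2 with hX
  have hXm : ∀ i, Measurable (X i) := fun i => (measurable_pi_apply i).pow_const 2
  have hindep : iIndepFun X π₁ :=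
    (iIndepFun_eval (gaussianReal 0 1)).comp (fun _ => (· ^ 2))
      (fun _ => measurable_id.pow_const 2)
  have hint : ∀ i ∈ Finset.univ, Integrable (fun g => Real.exp (t * X i g)) π₁ :=
    fun i _ => integrable_coord_sq i ht2
  have hsum : Integrable (fun g => Real.exp (t * (∑ i, X i) g)) π₁ :=
    hindep.integrable_exp_mul_sum hXm hint
  have hcher := measure_ge_le_exp_mul_mgf (μ := π₁) (X := ∑ i, X i) ((1+δ)*M) ht0 hsum
  have hmgf : mgf (∑ i, X i) π₁ t = ((Real.sqrt (1-2*t))⁻¹) ^ M := by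
    rw [hindep.mgf_sum hXm, Finset.prod_congr rfl (fun i _ => mgf_coord_sq i ht2),
      Finset.prod_const, Finset.card_univ, Fintype.card_fin]
  have hset : chiSqMeasure M (Set.Ici ((1+δ)*M)) = π₁ {g | (1+δ)*M ≤ (∑ i, X i) g} := by
    rw [chiSqMeasure, Measure.map_apply (by fun_prop) measurableSet_Ici]
    congr 1
    ext g
    simp only [hX, Set.mem_preimage, Set.mem_Ici, Set.mem_setOf_eq, Finset.sum_apply]
  rw [hset, ENNReal.le_ofReal_iff_toReal_le (measure_ne_top _ _) (Real.exp_nonneg _)]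
  refine hcher.trans ?_
  rw [hmgf]
  have hsq : (Real.sqrt (1-2*t))⁻¹ = Real.exp (Real.log (1+δ) / 2) := by
    rw [h2t, Real.sqrt_inv, inv_inv, ← Real.log_sqrt h1δ.le,
      Real.exp_log (Real.sqrt_pos.mpr h1δ)]
  rw [hsq, ← Real.exp_nat_mul, ← Real.exp_add, Real.exp_le_exp]
  have hlog := aux_log_bound hδ0 hδ1.le
  have htδ : t * (1+δ) = δ/2 := by rw [hts]; field_simp
  have hM0 : (0:ℝ) ≤ (M:ℝ) := Nat.cast_nonneg M
  nlinarith [mul_nonneg hM0 (sub_nonneg.mpr hlog)]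



end Auxiliary

theorem stmt_9 {Ω : Type*} [MeasureSpace Ω] (P : Measure Ω) [IsProbabilityMeasure P]
    (M N : ℕ) (hM : 0 < M) (δ ε : ℝ) (hδ0 : 0 < δ) (hδ1 : δ < 1)
    (hε : ε = (1 - δ) / (2 * (1 + δ)))
    (x : Fin N → ℝ) (hlo : 1 - ε ≤ ∑ j, (x j) ^ 2) (hhi : ∑ j, (x j) ^ 2 ≤ 1 + ε)
    -- the rows `u i` of `A` are independent ...
    (u : Fin M → Ω → Fin N → ℝ)
    (hindep : iIndepFun u P)
    -- ... and each row has law `N(0, I − (1−ε)xxᵀ)`, expressed via its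
    -- one-dimensional Gaussian projections (Cramér–Wold characterization):
    (hlaw : ∀ (i : Fin M) (y : Fin N → ℝ),
      Measure.map (fun ω => ∑ j, u i ω j * y j) P =
        gaussianReal 0 (Real.toNNReal
          (∑ j, (y j) ^ 2 - (1 - ε) * (∑ j, x j * y j) ^ 2))) :
    Measure.map (fun ω => ∑ i, ((1 / Real.sqrt M) * ∑ j, u i ω j * x j) ^ 2) P =
      Measure.map (fun t => (1 / (M : ℝ)) *
        ((∑ j, (x j) ^ 2) - (1 - ε) * (∑ j, (x j) ^ 2) ^ 2) * t) (chiSqMeasure M) ∧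
    P {ω | (1 - δ) * ∑ j, (x j) ^ 2 ≤ ∑ i, ((1 / Real.sqrt M) * ∑ j, u i ω j * x j) ^ 2} ≤
      ENNReal.ofReal (Real.exp (-(δ ^ 2 * M) / 12)) := by
  classical
  have h1δ : (0:ℝ) < 1 + δ := by linarith
  have hε0 : 0 < ε := by rw [hε]; exact div_pos (by linarith) (by linarith)
  have hε2 : ε < 1/2 := by rw [hε, div_lt_iff₀ (by linarith)]; linarith
  set s : ℝ := ∑ j, (x j) ^ 2 with hsdef
  have hspos : 0 < s := by linarith
  set sig2 : ℝ := s - (1-ε) * s^2 with hsig2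
  have hB : 0 < 1 - (1-ε)*s := by nlinarith [pow_pos hε0 2]
  have hsig2pos : 0 < sig2 := by rw [hsig2]; nlinarith [mul_pos hspos hB]
  set V : ℝ≥0 := Real.toNNReal sig2 with hVdef
  have hV : (V:ℝ) = sig2 := Real.coe_toNNReal _ hsig2pos.le
  set Z : Fin M → Ω → ℝ := fun i ω => ∑ j, u i ω j * x j with hZdef
  have hZlaw : ∀ i, Measure.map (Z i) P = gaussianReal 0 V := by
    intro i
    have h := hlaw i x
    have hxx : (∑ j, x j * x j) = s := by
      rw [hsdef]; exact Finset.sum_congr rfl fun j _ => (sq (x j)).symm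
    rw [hxx] at h
    exact h
  have hZae : ∀ i, AEMeasurable (Z i) P := by
    intro i
    by_contra h
    have h2 := hZlaw i
    rw [Measure.map_of_not_aemeasurable h] at h2
    have h3 : (gaussianReal 0 V) Set.univ = 1 := measure_univ
    rw [← h2] at h3
    simp at h3
  set J : Ω → Fin M → ℝ := fun ω i => Z i ω with hJdef
  have hJae : AEMeasurable J P := by
    choose g hgm hge using hZae
    refine ⟨fun ω i => g i ω, measurable_pi_lambda _ hgm, ?_⟩
    have hall : ∀ᵐ ω ∂P, ∀ i, Z i ω = g i ω := ae_all_iff.mpr hge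
    filter_upwards [hall] with ω h
    funext i
    exact h i
  have hφ : Measurable (fun y : Fin N → ℝ => ∑ j, y j * x j) :=
    Finset.measurable_sum _ fun j _ => (measurable_pi_apply j).mul_const _
  have hJlaw : Measure.map J P = Measure.pi (fun _ : Fin M => gaussianReal 0 V) := by
    refine (Measure.pi_eq fun E hE => ?_).symm
    rw [Measure.map_apply_of_aemeasurable hJae (MeasurableSet.univ_pi hE)]
    have hpre : J ⁻¹' Set.pi Set.univ E
        = ⋂ i ∈ Finset.univ, u i ⁻¹' ((fun y : Fin N → ℝ => ∑ j, y j * x j) ⁻¹' E i) := by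
      ext ω
      simp [hJdef, hZdef, Set.mem_pi]
    rw [hpre, hindep.measure_inter_preimage_eq_mul Finset.univ (fun i _ => hφ (hE i))]
    refine Finset.prod_congr rfl fun i _ => ?_
    have : u i ⁻¹' ((fun y : Fin N → ℝ => ∑ j, y j * x j) ⁻¹' E i) = Z i ⁻¹' E i := rfl
    rw [this, ← Measure.map_apply_of_aemeasurable (hZae i) (hE i), hZlaw i]
  set σ : ℝ := Real.sqrt sig2 with hσdef
  have hσsq : σ^2 = sig2 := Real.sq_sqrt hsig2pos.le
  have hgauss : gaussianReal 0 V = (gaussianReal 0 1).map (σ * ·) := by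
    rw [gaussianReal_map_const_mul σ]
    congr 1
    · simp
    · apply NNReal.coe_injective
      push_cast
      rw [hV, ← hσsq]
      ring
  have hπV : Measure.pi (fun _ : Fin M => gaussianReal 0 V)
      = Measure.map (fun g : Fin M → ℝ => fun i => σ * g i)
          (Measure.pi fun _ : Fin M => gaussianReal 0 1) := by
    simp only [hgauss]
    exact pi_map_aux (measurable_id.const_mul σ) (gaussianReal 0 1)
  set c : ℝ := 1/(M:ℝ) * sig2 with hcdef
  have hMpos : (0:ℝ) < M := Nat.cast_pos.mpr hM
  have hc0 : 0 < c := by rw [hcdef]; positivity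
  set F : (Fin M → ℝ) → ℝ := fun g => ∑ i, ((1 / Real.sqrt M) * g i)^2 with hFdef
  have hF : Measurable F :=
    Finset.measurable_sum _ fun i _ => (((measurable_pi_apply i).const_mul _).pow_const 2)
  have hsumsq : Measurable (fun g : Fin M → ℝ => ∑ i, (g i) ^ 2) :=
    Finset.measurable_sum _ fun i _ => ((measurable_pi_apply i).pow_const 2)
  have hWfun : (fun ω => ∑ i, ((1 / Real.sqrt M) * Z i ω) ^ 2) = F ∘ J := rfl
  have hWae : AEMeasurable (fun ω => ∑ i, ((1 / Real.sqrt M) * Z i ω) ^ 2) P := by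
    rw [hWfun]; exact hF.comp_aemeasurable hJae
  have hpart1 : Measure.map (fun ω => ∑ i, ((1 / Real.sqrt M) * Z i ω) ^ 2) P
      = Measure.map (fun t => c * t) (chiSqMeasure M) := by
    calc Measure.map (fun ω => ∑ i, ((1 / Real.sqrt M) * Z i ω) ^ 2) P
        = Measure.map F (Measure.map J P) := by
          rw [hWfun, AEMeasurable.map_map_of_aemeasurable hF.aemeasurable hJae]
      _ = Measure.map F (Measure.map (fun g : Fin M → ℝ => fun i => σ * g i)
            (Measure.pi fun _ : Fin M => gaussianReal 0 1)) := by rw [hJlaw, hπV]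
      _ = Measure.map (F ∘ (fun g : Fin M → ℝ => fun i => σ * g i))
            (Measure.pi fun _ : Fin M => gaussianReal 0 1) := by
          rw [Measure.map_map hF (measurable_pi_lambda _ fun i =>
            (measurable_pi_apply i).const_mul σ)]
      _ = Measure.map ((fun t => c * t) ∘ (fun g : Fin M → ℝ => ∑ i, (g i) ^ 2))
            (Measure.pi fun _ : Fin M => gaussianReal 0 1) := by
          congr 1
          funext g
          simp only [Function.comp_apply, hFdef]
          rw [Finset.mul_sum]
          refine Finset.sum_congr rfl fun i _ => ?_
          rw [mul_pow, mul_pow, div_pow, one_pow, Real.sq_sqrt (Nat.cast_nonneg M), hσsq,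
            hcdef]
          ring
      _ = Measure.map (fun t => c * t) (chiSqMeasure M) := by
          rw [chiSqMeasure, Measure.map_map (measurable_id'.const_mul c) hsumsq]
  constructor
  · exact hpart1
  · have hkey : (1+δ) * M ≤ ((1-δ) * s) / c := by
      rw [le_div_iff₀ hc0, hcdef]
      have h2ε : 2 * ε * (1+δ) = 1 - δ := by
        rw [hε]; field_simp
      have hfact : (1+δ) * sig2 ≤ (1-δ) * s := by
        rw [hsig2]
        nlinarith [mul_pos hspos h1δ, sq_nonneg (s - (1-ε)), mul_le_mul_of_nonneg_left hlo
          (le_of_lt (mul_pos hspos h1δ))]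
      calc (1+δ) * M * (1/(M:ℝ) * sig2) = (1+δ) * sig2 := by field_simp
        _ ≤ (1-δ) * s := hfact
    have hev : {ω | (1 - δ) * s ≤ ∑ i, ((1 / Real.sqrt M) * Z i ω) ^ 2}
        = (fun ω => ∑ i, ((1 / Real.sqrt M) * Z i ω) ^ 2) ⁻¹' Set.Ici ((1-δ) * s) := rfl
    rw [hev, ← Measure.map_apply_of_aemeasurable hWae measurableSet_Ici, hpart1,
      Measure.map_apply (measurable_id'.const_mul c) measurableSet_Ici]
    have hpre2 : (fun t => c * t) ⁻¹' Set.Ici ((1-δ) * s) = Set.Ici (((1-δ) * s)/c) := by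
      ext y
      simp only [Set.mem_preimage, Set.mem_Ici]
      rw [div_le_iff₀ hc0, mul_comm]
      exact ⟨fun h => by linarith [h], fun h => by linarith [h]⟩
    rw [hpre2]
    refine le_trans (measure_mono (Set.Ici_subset_Ici.mpr hkey)) ?_
    exact chiSq_tail M hδ0 hδ1
end

section
/- Suppose M ≤ N, s ≤ M, β = −(1−ε) with ε ∈ (0,1), ρ = s/(2N), and D = o(s²/M) as N → ∞ (with M, s → ∞). Then the quantity ∑_{d=0}^{⌊D/2⌋} (β²(M+2D)/(ρ²N²))^d · (ρ²N + 4ρ√(dN) + 3d)^d remains bounded as N → ∞. -/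
open Filter

private lemma le_of_sq_le'' {a b : ℝ} (hb : 0 ≤ b) (h : a ^ 2 ≤ b ^ 2) : a ≤ b := by
  nlinarith [sq_nonneg (a - b), sq_nonneg (a + b)]

set_option maxHeartbeats 1000000 in
private lemma aux_main (n m t Dv dv : ℝ) (ht : 1 ≤ t) (htm : t ≤ m) (hmn : m ≤ n)
    (hd0 : 0 ≤ dv) (hdD : dv ≤ Dv) (hu : Dv * m / t ^ 2 ≤ 1) :
    (m + 2 * Dv) * (t ^ 2 / n + 8 * t * Real.sqrt (dv * n) / n + 12 * dv) / t ^ 2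
      ≤ 1 + 62 * Real.sqrt (Dv * m / t ^ 2) := by
  have ht0 : 0 < t := by linarith
  have hm0 : 0 < m := by linarith
  have hn0 : 0 < n := by linarith
  have hD0 : 0 ≤ Dv := le_trans hd0 hdD
  set v := Real.sqrt (Dv * m / t ^ 2) with hv
  set w := Real.sqrt (Dv * n) with hw
  have hv0 : 0 ≤ v := Real.sqrt_nonneg _
  have hw0 : 0 ≤ w := Real.sqrt_nonneg _
  have hv2 : v ^ 2 = Dv * m / t ^ 2 := Real.sq_sqrt (by positivity)
  have hw2 : w ^ 2 = Dv * n := Real.sq_sqrt (by positivity)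
  have hv2' : v ^ 2 * t ^ 2 = Dv * m := by rw [hv2]; field_simp
  have hDm : Dv ≤ m := by nlinarith
  have htn2 : t ^ 2 ≤ n ^ 2 := by nlinarith
  have hDv2 : Dv ^ 2 ≤ m * n := by
    have h1 : Dv * Dv ≤ m * m := mul_le_mul hDm hDm hD0 hm0.le
    have h2 : m * m ≤ m * n := by nlinarith
    nlinarith
  have hv1 : v ≤ 1 := le_of_sq_le'' zero_le_one (by rw [hv2, one_pow]; exact hu)
  have hvtn : v ^ 2 * (t * n) ^ 2 = Dv * m * n ^ 2 := by
    rw [hv2]; field_simp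
  have h1 : m * w ≤ v * (t * n) := by
    apply le_of_sq_le'' (by positivity)
    rw [mul_pow, hw2, mul_pow, hvtn]
    nlinarith [mul_nonneg (mul_nonneg hD0 hn0.le) (mul_nonneg hm0.le (sub_nonneg.mpr hmn))]
  have h2 : Dv * w ≤ v * (t * n) := by
    apply le_of_sq_le'' (by positivity)
    rw [mul_pow, hw2, mul_pow, hvtn]
    nlinarith [mul_le_mul_of_nonneg_left hDv2 (mul_nonneg hD0 hn0.le)]
  have h3 : Dv ≤ v * n := by
    apply le_of_sq_le'' (by positivity)
    have hvn : (v * n) ^ 2 = Dv * m * n ^ 2 / t ^ 2 := by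
      rw [mul_pow, hv2]; field_simp
    rw [hvn, le_div_iff₀ (by positivity)]
    have a : Dv ^ 2 * t ^ 2 ≤ Dv * m * t ^ 2 := by
      nlinarith [mul_nonneg (mul_nonneg (sub_nonneg.2 hDm) hD0) (sq_nonneg t)]
    have b : Dv * m * t ^ 2 ≤ Dv * m * n ^ 2 := by
      nlinarith [mul_le_mul_of_nonneg_left htn2 (mul_nonneg hD0 hm0.le)]
    linarith
  have hvv : v ^ 2 ≤ v := by nlinarith
  have h4 : Dv * m ≤ v * t ^ 2 := by
    nlinarith [mul_le_mul_of_nonneg_right hvv (sq_nonneg t)]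
  have h5 : Dv ^ 2 ≤ v * t ^ 2 := by nlinarith
  have hsd : Real.sqrt (dv * n) ≤ w := Real.sqrt_le_sqrt (by nlinarith)
  have key : (m + 2 * Dv) * (t ^ 2 / n + 8 * t * w / n + 12 * Dv) ≤ (1 + 62 * v) * t ^ 2 := by
    have expand : (m + 2 * Dv) * (t ^ 2 / n + 8 * t * w / n + 12 * Dv)
        = (m + 2 * Dv) * (t ^ 2 + 8 * t * w + 12 * Dv * n) / n := by field_simp
    rw [expand, div_le_iff₀ hn0]
    linarith [mul_le_mul_of_nonneg_left h1 (by positivity : (0:ℝ) ≤ 8 * t),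
      mul_le_mul_of_nonneg_left h2 (by positivity : (0:ℝ) ≤ 16 * t),
      mul_le_mul_of_nonneg_left h3 (by positivity : (0:ℝ) ≤ 2 * t ^ 2),
      mul_le_mul_of_nonneg_left h4 (by positivity : (0:ℝ) ≤ 12 * n),
      mul_le_mul_of_nonneg_left h5 (by positivity : (0:ℝ) ≤ 24 * n),
      mul_le_mul_of_nonneg_left hmn (by positivity : (0:ℝ) ≤ t ^ 2)]
  calc (m + 2 * Dv) * (t ^ 2 / n + 8 * t * Real.sqrt (dv * n) / n + 12 * dv) / t ^ 2
      ≤ (m + 2 * Dv) * (t ^ 2 / n + 8 * t * w / n + 12 * Dv) / t ^ 2 := by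
        gcongr
    _ ≤ (1 + 62 * v) * t ^ 2 / t ^ 2 := by gcongr
    _ = 1 + 62 * v := by field_simp

theorem stmt_18 (ε : ℝ) (hε0 : 0 < ε) (hε1 : ε < 1)
    (M s D : ℕ → ℕ) (ρ : ℕ → ℝ)
    (hMN : ∀ N, M N ≤ N) (hsM : ∀ N, s N ≤ M N)
    (hMinf : Tendsto (fun N => M N) atTop atTop)
    (hsinf : Tendsto (fun N => s N) atTop atTop)
    (hρ : ∀ N, ρ N = (s N : ℝ) / (2 * N))
    (hD : (fun N => (D N : ℝ)) =o[atTop] fun N => (s N : ℝ) ^ 2 / (M N : ℝ)) :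
    ∃ C : ℝ, ∀ᶠ N in atTop,
      ∑ d ∈ Finset.range (D N / 2 + 1),
        (((-(1 - ε)) ^ 2 * ((M N : ℝ) + 2 * D N) / ((ρ N) ^ 2 * (N : ℝ) ^ 2)) ^ d *
          ((ρ N) ^ 2 * N + 4 * ρ N * Real.sqrt (d * N) + 3 * d) ^ d) ≤ C := by
  set c : ℝ := (1 - ε) ^ 2 with hc
  have hc0 : 0 < c := pow_pos (by linarith) 2
  have hc1 : c < 1 := by nlinarith
  set q : ℝ := (1 + c) / 2 with hq
  have hq0 : 0 < q := by positivity
  have hq1 : q < 1 := by rw [hq]; linarith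
  have hcq : c < q := by rw [hq]; linarith
  set κ : ℝ := (q - c) / (62 * c) with hκ
  have hκ0 : 0 < κ := by apply div_pos <;> linarith
  set δ : ℝ := min 1 (κ ^ 2) with hδ
  have hδ0 : 0 < δ := lt_min one_pos (pow_pos hκ0 2)
  refine ⟨(1 - q)⁻¹, ?_⟩
  filter_upwards [eventually_ge_atTop 1, hMinf.eventually_ge_atTop 1,
    hsinf.eventually_ge_atTop 1, hD.def hδ0] with N hN1 hM1 hs1 hDb
  -- real casts
  have hn1 : (1 : ℝ) ≤ (N : ℝ) := by exact_mod_cast hN1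
  have ht1 : (1 : ℝ) ≤ (s N : ℝ) := by exact_mod_cast hs1
  have hm1 : (1 : ℝ) ≤ (M N : ℝ) := by exact_mod_cast hM1
  have htm : (s N : ℝ) ≤ (M N : ℝ) := by exact_mod_cast hsM N
  have hmn : (M N : ℝ) ≤ (N : ℝ) := by exact_mod_cast hMN N
  have ht0 : (0 : ℝ) < (s N : ℝ) := by linarith
  have hm0 : (0 : ℝ) < (M N : ℝ) := by linarith
  have hn0 : (0 : ℝ) < (N : ℝ) := by linarith
  -- little-o bound
  have hu : (D N : ℝ) * (M N : ℝ) / (s N : ℝ) ^ 2 ≤ δ := by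
    simp only [Real.norm_natCast, Real.norm_eq_abs] at hDb
    have habs : |(s N : ℝ) ^ 2 / (M N : ℝ)| = (s N : ℝ) ^ 2 / (M N : ℝ) :=
      abs_of_nonneg (by positivity)
    rw [habs] at hDb
    have hDb' : (D N : ℝ) ≤ δ * (s N : ℝ) ^ 2 / (M N : ℝ) := by
      rw [mul_div_assoc]; exact le_trans (le_abs_self _) hDb
    have h2 := (le_div_iff₀ hm0).mp hDb'
    rw [div_le_iff₀ (by positivity : (0:ℝ) < (s N : ℝ) ^ 2)]
    linarith
  have hu1 : (D N : ℝ) * (M N : ℝ) / (s N : ℝ) ^ 2 ≤ 1 :=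
    hu.trans (min_le_left _ _)
  have hvκ : Real.sqrt ((D N : ℝ) * (M N : ℝ) / (s N : ℝ) ^ 2) ≤ κ := by
    calc Real.sqrt ((D N : ℝ) * (M N : ℝ) / (s N : ℝ) ^ 2)
        ≤ Real.sqrt (κ ^ 2) := Real.sqrt_le_sqrt (hu.trans (min_le_right _ _))
      _ = κ := Real.sqrt_sq hκ0.le
  -- per-term bound
  have hterm : ∀ d ∈ Finset.range (D N / 2 + 1),
      ((-(1 - ε)) ^ 2 * ((M N : ℝ) + 2 * D N) / ((ρ N) ^ 2 * (N : ℝ) ^ 2)) ^ d *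
        ((ρ N) ^ 2 * N + 4 * ρ N * Real.sqrt (d * N) + 3 * d) ^ d ≤ q ^ d := by
    intro d hd
    have hdD : (d : ℝ) ≤ (D N : ℝ) := by
      have : d ≤ D N := le_trans (Nat.lt_succ_iff.mp (Finset.mem_range.mp hd))
        (Nat.div_le_self _ _)
      exact_mod_cast this
    rw [← mul_pow]
    have base_eq : (-(1 - ε)) ^ 2 * ((M N : ℝ) + 2 * D N) / ((ρ N) ^ 2 * (N : ℝ) ^ 2) *
        ((ρ N) ^ 2 * N + 4 * ρ N * Real.sqrt (d * N) + 3 * d)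
        = c * (((M N : ℝ) + 2 * (D N : ℝ)) *
            ((s N : ℝ) ^ 2 / (N : ℝ) + 8 * (s N : ℝ) * Real.sqrt ((d : ℝ) * (N : ℝ)) / (N : ℝ)
              + 12 * (d : ℝ)) / (s N : ℝ) ^ 2) := by
      rw [hρ N, neg_sq, ← hc]
      field_simp
      ring
    rw [base_eq]
    have hbase0 : 0 ≤ c * (((M N : ℝ) + 2 * (D N : ℝ)) *
        ((s N : ℝ) ^ 2 / (N : ℝ) + 8 * (s N : ℝ) * Real.sqrt ((d : ℝ) * (N : ℝ)) / (N : ℝ)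
          + 12 * (d : ℝ)) / (s N : ℝ) ^ 2) := by positivity
    apply pow_le_pow_left₀ hbase0
    have haux := aux_main (N : ℝ) (M N : ℝ) (s N : ℝ) (D N : ℝ) (d : ℝ)
      ht1 htm hmn (by positivity) hdD hu1
    calc c * (((M N : ℝ) + 2 * (D N : ℝ)) *
          ((s N : ℝ) ^ 2 / (N : ℝ) + 8 * (s N : ℝ) * Real.sqrt ((d : ℝ) * (N : ℝ)) / (N : ℝ)
            + 12 * (d : ℝ)) / (s N : ℝ) ^ 2)
        ≤ c * (1 + 62 * Real.sqrt ((D N : ℝ) * (M N : ℝ) / (s N : ℝ) ^ 2)) := by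
          exact mul_le_mul_of_nonneg_left haux hc0.le
      _ ≤ c * (1 + 62 * κ) := by
          have : Real.sqrt ((D N : ℝ) * (M N : ℝ) / (s N : ℝ) ^ 2) ≤ κ := hvκ
          nlinarith
      _ = q := by rw [hκ]; field_simp; ring
  calc ∑ d ∈ Finset.range (D N / 2 + 1),
        (((-(1 - ε)) ^ 2 * ((M N : ℝ) + 2 * D N) / ((ρ N) ^ 2 * (N : ℝ) ^ 2)) ^ d *
          ((ρ N) ^ 2 * N + 4 * ρ N * Real.sqrt (d * N) + 3 * d) ^ d)
      ≤ ∑ d ∈ Finset.range (D N / 2 + 1), q ^ d := Finset.sum_le_sum hterm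
    _ ≤ (1 - q)⁻¹ := by
        have h := Summable.sum_le_tsum (Finset.range (D N / 2 + 1))
          (fun i _ => by positivity)
          (summable_geometric_of_lt_one hq0.le hq1)
        rwa [tsum_geometric_of_lt_one hq0.le hq1] at h
end
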